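/- Let T be a finite nonempty set partitioned into families {F_k}_{k∈K}, let C > 0 and weights w_k ≥ 0 satisfy w_k/|F_k| ≤ C/|T| for every k, let L > 0 and let ψ_t : [0,1] → ℝ be L-Lipschitz for each t ∈ T. Let n ≥ 1 and let (q_{t,i})_{t∈T, 1≤i≤n} be independent random variables with values in [0,1]. Define Φ̂ = Σ_k (w_k/|F_k|) Σ_{t∈F_k} (1/n) Σ_{i=1}^n ψ_t(q_{t,i}). Then for every ε > 0, P(|Φ̂ − E[Φ̂]| ≥ ε) ≤ 2·exp(−2·n·|T|·ε² / (C·L)²). -/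

import Mathlib

open MeasureTheory Finset ProbabilityTheory

/-- The family `F_k ⊆ T` of tasks assigned to family index `k`. -/
def famSet {T K : Type*} [Fintype T] [DecidableEq K] (fam : T → K) (k : K) : Finset T :=
  Finset.univ.filter fun t => fam t = k

/-- The plug-in estimator of the linear part of the tractable AAI functional:
`Φ̂(ω) = ∑_k (w_k/|F_k|) ∑_{t∈F_k} (1/n) ∑_i ψ_t(q_{t,i}(ω))`. -/
noncomputable def linEst {T K : Type*} [Fintype T] [Fintype K] [DecidableEq K] {Ω : Type*}
    (fam : T → K) (w : K → ℝ) (ψ : T → ℝ → ℝ) (n : ℕ)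
    (q : T × Fin n → Ω → ℝ) (ω : Ω) : ℝ :=
  ∑ k : K, (w k / ((famSet fam k).card : ℝ)) *
    ∑ t ∈ famSet fam k, (n : ℝ)⁻¹ * ∑ i : Fin n, ψ t (q (t, i) ω)

/-!
The estimator is a sum of `N = n |T|` independent terms, the term of the draw `(t, i)` being
`(w_k / |F_k|) (1 / n) ψ_t(q_{t,i})`. An `L`-Lipschitz function on `[0, 1]` takes values in an
interval of length `L`, so by `w_k / |F_k| ≤ C / |T|` each term lies in an interval of length
`c = C L / N`. Hoeffding's lemma makes each centered term sub-Gaussian with parameter `c² / 4`,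
and the Chernoff bound for their independent sum gives
`2 exp (-2 ε² / (N c²)) = 2 exp (-2 N ε² / (C L)²)`.
-/

open Real Set
open scoped NNReal

namespace ProbabilityTheory.HasSubgaussianMGF

variable {Ω : Type*} [MeasurableSpace Ω] {μ : Measure Ω} {X : Ω → ℝ} {c : ℝ≥0}

lemma measure_abs_ge_le [IsFiniteMeasure μ] (h : HasSubgaussianMGF X c μ) {ε : ℝ}
    (hε : 0 ≤ ε) :
    μ.real {ω | ε ≤ |X ω|} ≤ 2 * exp (-ε ^ 2 / (2 * c)) := by
  have hsplit : {ω | ε ≤ |X ω|} = {ω | ε ≤ X ω} ∪ {ω | ε ≤ (-X) ω} := by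
    ext ω
    simp only [mem_ofPred_eq, mem_union, Pi.neg_apply, le_abs']
    constructor <;> rintro (h | h) <;> first | (left; linarith) | (right; linarith)
  calc μ.real {ω | ε ≤ |X ω|}
      ≤ μ.real {ω | ε ≤ X ω} + μ.real {ω | ε ≤ (-X) ω} := hsplit ▸ measureReal_union_le _ _
    _ ≤ exp (-ε ^ 2 / (2 * c)) + exp (-ε ^ 2 / (2 * c)) :=
        add_le_add (h.measure_ge_le hε) (h.neg.measure_ge_le hε)
    _ = 2 * exp (-ε ^ 2 / (2 * c)) := by ring

end ProbabilityTheory.HasSubgaussianMGF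

section Hoeffding

variable {ι Ω : Type*} [Fintype ι] [MeasurableSpace Ω] {μ : Measure Ω} [IsProbabilityMeasure μ]

theorem measure_abs_sum_sub_integral_ge_le_of_mem_Icc {X : ι → Ω → ℝ}
    (hindep : iIndepFun X μ) (hmeas : ∀ i, AEMeasurable (X i) μ) {a b : ι → ℝ}
    (hab : ∀ i, ∀ᵐ ω ∂μ, X i ω ∈ Icc (a i) (b i)) {ε : ℝ} (hε : 0 ≤ ε) :
    μ.real {ω | ε ≤ |∑ i, X i ω - ∫ ω', ∑ i, X i ω' ∂μ|}
      ≤ 2 * exp (-2 * ε ^ 2 / ∑ i, (b i - a i) ^ 2) := by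
  set Z : ι → Ω → ℝ := fun i ω => X i ω - ∫ ω', X i ω' ∂μ
  have hZ : ∀ i ∈ (univ : Finset ι), HasSubgaussianMGF (Z i) ((‖b i - a i‖₊ / 2) ^ 2) μ :=
    fun i _ => hasSubgaussianMGF_of_mem_Icc (hmeas i) (hab i)
  have hZindep : iIndepFun Z μ :=
    hindep.comp (fun i x => x - ∫ ω', X i ω' ∂μ) fun _ => measurable_id.sub_const _
  have hcentered : ∀ ω, ∑ i, X i ω - ∫ ω', ∑ i, X i ω' ∂μ = ∑ i, Z i ω := fun ω => by
    rw [integral_finsetSum _ fun i _ => Integrable.of_mem_Icc _ _ (hmeas i) (hab i),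
      ← sum_sub_distrib]
  have hparam :
      (2 * ((∑ i, (‖b i - a i‖₊ / 2) ^ 2 : ℝ≥0) : ℝ)) = (∑ i, (b i - a i) ^ 2) / 2 := by
    push_cast
    rw [mul_sum, sum_div]
    refine sum_congr rfl fun i _ => ?_
    rw [Real.norm_eq_abs, div_pow, sq_abs]
    ring
  calc μ.real {ω | ε ≤ |∑ i, X i ω - ∫ ω', ∑ i, X i ω' ∂μ|}
      = μ.real {ω | ε ≤ |∑ i, Z i ω|} := by simp_rw [hcentered]
    _ ≤ 2 * exp (-ε ^ 2 / (2 * ((∑ i, (‖b i - a i‖₊ / 2) ^ 2 : ℝ≥0) : ℝ))) :=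
        (HasSubgaussianMGF.sum_of_iIndepFun hZindep hZ).measure_abs_ge_le hε
    _ = 2 * exp (-2 * ε ^ 2 / ∑ i, (b i - a i) ^ 2) := by
        rw [hparam, div_div_eq_mul_div]
        ring_nf

lemma LipschitzOnWith.exists_mapsTo_Icc_add {f : ℝ → ℝ} {K : ℝ≥0} {a b : ℝ}
    (hf : LipschitzOnWith K f (Icc a b)) :
    ∃ m, MapsTo f (Icc a b) (Icc m (m + K * (b - a))) := by
  rcases (Icc a b).eq_empty_or_nonempty with hempty | hne
  · exact ⟨0, hempty ▸ mapsTo_empty _ _⟩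
  obtain ⟨x₀, hx₀, hmin⟩ := isCompact_Icc.exists_isMinOn hne hf.continuousOn
  refine ⟨f x₀, fun x hx => ⟨hmin hx, ?_⟩⟩
  calc f x ≤ f x₀ + dist (f x) (f x₀) := by
        rw [Real.dist_eq]; linarith [le_abs_self (f x - f x₀)]
    _ ≤ f x₀ + K * dist x x₀ := by gcongr; exact hf.dist_le_mul x hx x₀ hx₀
    _ ≤ f x₀ + K * (b - a) := by gcongr; exact Real.dist_le_of_mem_Icc hx hx₀

theorem measure_abs_sum_comp_sub_integral_ge_le_of_lipschitzOnWith {q : ι → Ω → ℝ}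
    (hindep : iIndepFun q μ) (hmeas : ∀ i, Measurable (q i)) {a b : ℝ} (hab : a ≤ b)
    (hq : ∀ i ω, q i ω ∈ Icc a b) {f : ι → ℝ → ℝ} {K : ι → ℝ≥0}
    (hf : ∀ i, LipschitzOnWith (K i) (f i) (Icc a b)) {ε : ℝ} (hε : 0 ≤ ε) :
    μ.real {ω | ε ≤ |∑ i, f i (q i ω) - ∫ ω', ∑ i, f i (q i ω') ∂μ|}
      ≤ 2 * exp (-2 * ε ^ 2 / ∑ i, (K i * (b - a)) ^ 2) := by
  -- extending `f i` constantly off `[a, b]` makes it continuous, hence measurable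
  set g : ι → ℝ → ℝ := fun i => IccExtend hab ((Icc a b).domRestrict (f i))
  have hg : ∀ i, Continuous (g i) := fun i =>
    continuous_IccExtend_iff.2 (hf i).continuousOn.domRestrict
  have hgq : (fun i => g i ∘ q i) = fun i ω => f i (q i ω) := by
    ext i ω
    simp only [g, Function.comp_apply, IccExtend_of_mem hab _ (hq i ω)]
    rfl
  choose m hm using fun i => (hf i).exists_mapsTo_Icc_add
  have := measure_abs_sum_sub_integral_ge_le_of_mem_Icc (μ := μ)
    (X := fun i ω => f i (q i ω)) (hgq ▸ hindep.comp g fun i => (hg i).measurable)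
    (fun i => congrFun hgq i ▸ ((hg i).measurable.comp (hmeas i)).aemeasurable)
    (fun i => ae_of_all _ fun ω => hm i (hq i ω)) hε
  simpa only [add_sub_cancel_left] using this

end Hoeffding

lemma lipschitzOnWith_const_mul_of_abs_sub_le {f : ℝ → ℝ} {s : Set ℝ} {k L c : ℝ}
    (hf : ∀ x ∈ s, ∀ y ∈ s, |f x - f y| ≤ L * |x - y|) (hk : 0 ≤ k) (hkL : k * L ≤ c) :
    LipschitzOnWith c.toNNReal (fun x => k * f x) s := by
  refine LipschitzOnWith.of_dist_le_mul fun x hx y hy => ?_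
  rw [Real.dist_eq, Real.dist_eq, ← mul_sub, abs_mul, abs_of_nonneg hk]
  calc k * |f x - f y| ≤ k * (L * |x - y|) := by gcongr; exact hf x hx y hy
    _ = k * L * |x - y| := by ring
    _ ≤ c.toNNReal * |x - y| := by gcongr; exact hkL.trans (Real.le_coe_toNNReal c)

lemma linEst_eq_sum {T K : Type*} [Fintype T] [Fintype K] [DecidableEq K] {Ω : Type*}
    (fam : T → K) (w : K → ℝ) (ψ : T → ℝ → ℝ) (n : ℕ) (q : T × Fin n → Ω → ℝ) (ω : Ω) :
    linEst fam w ψ n q ω = ∑ ti : T × Fin n,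
      (n : ℝ)⁻¹ * (w (fam ti.1) / (famSet fam (fam ti.1)).card) * ψ ti.1 (q ti ω) := by
  rw [linEst, Fintype.sum_prod_type, ← sum_fiberwise univ fam]
  refine sum_congr rfl fun k _ => ?_
  rw [mul_sum]
  refine sum_congr (by rfl) fun t ht => ?_
  obtain rfl : fam t = k := (mem_filter.1 ht).2
  rw [mul_sum, mul_sum]
  exact sum_congr rfl fun i _ => by ring

theorem stmt_14_general {T K : Type*} [Fintype T] [Fintype K]
    [DecidableEq K] {Ω : Type*} [MeasurableSpace Ω]
    (μ : Measure Ω) [IsProbabilityMeasure μ]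
    (fam : T → K)
    (C : ℝ) (hC : 0 < C) (w : K → ℝ) (hw : ∀ k, 0 ≤ w k)
    (hwC : ∀ k, w k / ((famSet fam k).card : ℝ) ≤ C / (Fintype.card T : ℝ))
    (L : ℝ) (hL : 0 < L) (ψ : T → ℝ → ℝ)
    (hψ : ∀ t, ∀ a ∈ Set.Icc (0:ℝ) 1, ∀ b ∈ Set.Icc (0:ℝ) 1,
      |ψ t a - ψ t b| ≤ L * |a - b|)
    (n : ℕ)
    (q : T × Fin n → Ω → ℝ)
    (hqmeas : ∀ ti, Measurable (q ti))
    (hq01 : ∀ ti ω, q ti ω ∈ Set.Icc (0:ℝ) 1)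
    (hindep : iIndepFun q μ) :
    ∀ ε : ℝ, 0 < ε →
      (μ {ω | ε ≤ |linEst fam w ψ n q ω - ∫ ω', linEst fam w ψ n q ω' ∂μ|}).toReal
        ≤ 2 * Real.exp (-(2 * n * (Fintype.card T : ℝ) * ε ^ 2) / (C * L) ^ 2) := by
  intro ε hε
  set c : ℝ := C * L / (n * Fintype.card T)
  have hc : 0 ≤ c := by positivity
  have hLip : ∀ ti : T × Fin n, LipschitzOnWith c.toNNReal
      (fun x => (n : ℝ)⁻¹ * (w (fam ti.1) / (famSet fam (fam ti.1)).card) * ψ ti.1 x)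
      (Icc 0 1) := fun ⟨t, _⟩ =>
    have := hw (fam t)
    lipschitzOnWith_const_mul_of_abs_sub_le (hψ t) (by positivity) <| calc
      (n : ℝ)⁻¹ * (w (fam t) / (famSet fam (fam t)).card) * L
          ≤ (n : ℝ)⁻¹ * (C / Fintype.card T) * L := by
            gcongr (n : ℝ)⁻¹ * ?_ * L
            exact hwC _
      _ = c := by ring
  have hsum : ∑ _ti : T × Fin n, ((c.toNNReal : ℝ) * (1 - 0)) ^ 2
      = (C * L) ^ 2 / (n * Fintype.card T) := by
    simp only [sum_const, card_univ, Fintype.card_prod, Fintype.card_fin, nsmul_eq_mul,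
      Real.coe_toNNReal c hc, sub_zero, mul_one, c]
    push_cast
    rcases eq_or_ne ((n : ℝ) * Fintype.card T) 0 with hN | hN
    · rw [mul_comm (Fintype.card T : ℝ), hN]; simp
    · field_simp
  simp only [linEst_eq_sum]
  refine (measure_abs_sum_comp_sub_integral_ge_le_of_lipschitzOnWith hindep hqmeas
    zero_le_one hq01 hLip hε.le).trans_eq ?_
  rw [hsum, div_div_eq_mul_div]
  ring_nf

/-- **McDiarmid concentration of the linear part of the plug-in AAI estimator.**
With weights satisfying `w_k/|F_k| ≤ C/|T|`, `L`-Lipschitz per-task scores `ψ_t`, and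
`n` independent `[0,1]`-valued seed draws per task, the estimator
`Φ̂ = ∑_k (w_k/|F_k|) ∑_{t∈F_k} (1/n) ∑_i ψ_t(q_{t,i})` satisfies
`P(|Φ̂ − E Φ̂| ≥ ε) ≤ 2 exp(−2 n |T| ε² / (C L)²)` for every `ε > 0`. -/
theorem stmt_14 {T K : Type*} [Fintype T] [Nonempty T] [Fintype K] [Nonempty K]
    [DecidableEq K] {Ω : Type*} [MeasurableSpace Ω]
    (μ : Measure Ω) [IsProbabilityMeasure μ]
    (fam : T → K) (hfam : Function.Surjective fam)
    (C : ℝ) (hC : 0 < C) (w : K → ℝ) (hw : ∀ k, 0 ≤ w k)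
    (hwC : ∀ k, w k / ((famSet fam k).card : ℝ) ≤ C / (Fintype.card T : ℝ))
    (L : ℝ) (hL : 0 < L) (ψ : T → ℝ → ℝ)
    (hψ : ∀ t, ∀ a ∈ Set.Icc (0:ℝ) 1, ∀ b ∈ Set.Icc (0:ℝ) 1,
      |ψ t a - ψ t b| ≤ L * |a - b|)
    (n : ℕ) (hn : 1 ≤ n)
    (q : T × Fin n → Ω → ℝ)
    (hqmeas : ∀ ti, Measurable (q ti))
    (hq01 : ∀ ti ω, q ti ω ∈ Set.Icc (0:ℝ) 1)
    (hindep : iIndepFun q μ) :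
    ∀ ε : ℝ, 0 < ε →
      (μ {ω | ε ≤ |linEst fam w ψ n q ω - ∫ ω', linEst fam w ψ n q ω' ∂μ|}).toReal
        ≤ 2 * Real.exp (-(2 * n * (Fintype.card T : ℝ) * ε ^ 2) / (C * L) ^ 2) :=
  stmt_14_general μ fam C hC w hw hwC L hL ψ hψ n q hqmeas hq01 hindep
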